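/- For every integer k with 0 ≤ k ≤ α_t, c_k(I) = Σ_{i=k}^{α_t} (−1)^{i−k} · b_i(I); in particular, each c_k(I) is an integer. -/

import Mathlib

/-
A sequence counted by `N(I, m + 1)` is determined by the set `S ⊆ {2, …, m + 1}` of its values
other than `1` together with its standardization, obtained by replacing every value by its rank in
`{1} ∪ S`. Standardizing is order preserving, so it keeps the descent set and the condition on the
last entry, and it turns the sequences with value set `S` bijectively into those counted by
`b_{|S|}`. Hence `N(I, m + 1) = ∑ᵢ C(m, i) bᵢ`. Writing `C(m, i)` as the alternating sum
`∑_{k ≤ i} (-1)^(i-k) C(m + 1, k)` gives an expansion of `N(I, n)` in the basis `C(n, k)`, and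
coefficients in that basis are unique because taking finite differences lowers the degree.
-/

open Finset

/-- Sequences of length `ℓ` (positions `1..ℓ`) with entries in `{1,…,n}`,
encoded as functions `ℕ → ℕ` vanishing outside `[1, ℓ]`. -/
def Seqs (ℓ n : ℕ) : Set (ℕ → ℕ) :=
  {v | (∀ i ∈ Finset.Icc 1 ℓ, v i ∈ Finset.Icc 1 n) ∧ ∀ i, i ∉ Finset.Icc 1 ℓ → v i = 0}

/-- Descent set of a sequence of length `ℓ`:
`Des(v) = {i ∈ {1,…,ℓ-1} : v_i > v_{i+1}}`. -/
def Des (ℓ : ℕ) (v : ℕ → ℕ) : Set ℕ :=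
  {i | 1 ≤ i ∧ i < ℓ ∧ v (i + 1) < v i}

/-- Number of occurrences of the value `j` among positions `1..ℓ` of `v`. -/
def mult (ℓ : ℕ) (v : ℕ → ℕ) (j : ℕ) : ℕ :=
  ((Finset.Icc 1 ℓ).filter fun i => v i = j).card

/-- `𝔡^m(I, n)`: the number of sequences of length `n*m`, in which each of `1,…,n`
appears exactly `m` times, whose descent set is `I`. -/
noncomputable def dP (m : ℕ) (I : Finset ℕ) (n : ℕ) : ℕ :=
  Set.ncard {w ∈ Seqs (n * m) n |
    Des (n * m) w = ↑I ∧ ∀ j ∈ Finset.Icc 1 n, mult (n * m) w j = m}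

/-- `N(I, n)`: the number of sequences `v = (v_1, …, v_{α_t})` with entries in `{1,…,n}`
such that `Des v = I \ {α_t}` and `v_{α_t} ≠ 1`. -/
noncomputable def Ncount (I : Finset ℕ) (n : ℕ) : ℕ :=
  Set.ncard {v ∈ Seqs (I.sup id) n |
    Des (I.sup id) v = ↑(I.erase (I.sup id)) ∧ v (I.sup id) ≠ 1}

/-- `D^m(I, n)`: the number of sequences `v = (v_1, …, v_{α_t})` with entries in `{1,…,n}`
such that `Des v = I \ {α_t}` and each of `1,…,n` appears at most `m` times in `v`. -/
noncomputable def Dcount (m : ℕ) (I : Finset ℕ) (n : ℕ) : ℕ :=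
  Set.ncard {v ∈ Seqs (I.sup id) n |
    Des (I.sup id) v = ↑(I.erase (I.sup id)) ∧ ∀ j ∈ Finset.Icc 1 n, mult (I.sup id) v j ≤ m}

/-- `b_i(I)`: the number of sequences `v = (v_1, …, v_{α_t})` with entries in `{1,…,i+1}`
such that `Des v = I \ {α_t}`, every number in `{2,…,i+1}` occurs in `v`, and `v_{α_t} ≠ 1`. -/
noncomputable def bcoef (I : Finset ℕ) (i : ℕ) : ℕ :=
  Set.ncard {v ∈ Seqs (I.sup id) (i + 1) |
    Des (I.sup id) v = ↑(I.erase (I.sup id)) ∧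
    (∀ l ∈ Finset.Icc 2 (i + 1), ∃ j ∈ Finset.Icc 1 (I.sup id), v j = l) ∧
    v (I.sup id) ≠ 1}

/-- `L(I)`: the length of the longest run of consecutive integers contained in `I`. -/
def longestRun (I : Finset ℕ) : ℕ :=
  I.sup fun a => ((Finset.Icc a (I.sup id)).filter fun b => Finset.Icc a b ⊆ I).card

/-- `alphaVal I k` is the `k`-th smallest element of `I` (`1`-indexed), with `alphaVal I 0 = 0`. -/
def alphaVal (I : Finset ℕ) (k : ℕ) : ℕ :=
  if k = 0 then 0 else (I.sort (· ≤ ·)).getD (k - 1) 0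

/-- For a composition `A = (a_1,…,a_s)` of `t = |I|`, `sigmaC I A i` is
`σ_{i+1} = β_{a_1+⋯+a_i+1} + ⋯ + β_{a_1+⋯+a_{i+1}}`, where `β` is the sequence of first
differences of `(0, α_1, …, α_t)`; by telescoping this equals
`α_{a_1+⋯+a_{i+1}} - α_{a_1+⋯+a_i}`. -/
def sigmaC (I : Finset ℕ) {t : ℕ} (A : Composition t) (i : ℕ) : ℕ :=
  alphaVal I (A.sizeUpTo (i + 1)) - alphaVal I (A.sizeUpTo i)

/-- `C(A, I)` for a composition `A = (a_1,…,a_r)`: the number of sequences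
`v = (v_1, …, v_{α_t})` with entries in `{1,…,r}` such that `Des v = I \ {α_t}`
and the number `j` appears exactly `a_j` times in `v`, for each `j ∈ {1,…,r}`. -/
noncomputable def Ccount (I : Finset ℕ) {N : ℕ} (A : Composition N) : ℕ :=
  Set.ncard {v ∈ Seqs (I.sup id) A.length |
    Des (I.sup id) v = ↑(I.erase (I.sup id)) ∧
    ∀ j ∈ Finset.Icc 1 A.length, mult (I.sup id) v j = A.blocks.getD (j - 1) 0}

/-- The generalized binomial coefficient `C(a, i) = a(a-1)⋯(a-i+1)/i!` for an integer `a`. -/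
def genChoose (a : ℤ) (i : ℕ) : ℚ :=
  (∏ j ∈ Finset.range i, ((a : ℚ) - (j : ℚ))) / (Nat.factorial i)

section BinomialBasis

variable {R : Type*} [CommRing R]

theorem choose_eq_sum_range_neg_one_pow_mul_choose_succ (m i : ℕ) :
    (m.choose i : R) = ∑ k ∈ range (i + 1), (-1) ^ (i - k) * ((m + 1).choose k : R) := by
  have hℤ : (m.choose i : ℤ) = ∑ k ∈ range (i + 1), (-1) ^ (i - k) * ((m + 1).choose k : ℤ) := by
    calc (m.choose i : ℤ) = (-1) ^ i * ((-1) ^ i * m.choose i) := by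
          rw [← mul_assoc, ← mul_pow]; simp
      _ = _ := by
          rw [← Int.alternating_sum_range_choose_eq_choose, mul_sum]
          refine sum_congr rfl fun k hk => ?_
          obtain ⟨j, rfl⟩ := Nat.exists_eq_add_of_le (Nat.lt_succ_iff.1 (mem_range.1 hk))
          rw [← mul_assoc, ← pow_add, Nat.add_sub_cancel_left, add_comm k j, add_assoc, pow_add,
            ← two_mul, pow_mul, neg_one_sq, one_pow, mul_one]
  exact_mod_cast congrArg (Int.cast : ℤ → R) hℤ

theorem sum_mul_choose_eq_sum_mul_choose_succ (b : ℕ → R) (α m : ℕ) :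
    ∑ i ∈ range (α + 1), b i * (m.choose i : R) =
      ∑ k ∈ range (α + 1), (∑ i ∈ Icc k α, (-1) ^ (i - k) * b i) * ((m + 1).choose k : R) := by
  simp_rw [choose_eq_sum_range_neg_one_pow_mul_choose_succ (R := R) m, mul_sum, sum_mul]
  refine (sum_comm' fun i k => ?_).trans (sum_congr rfl fun k _ => sum_congr rfl fun i _ => by ring)
  simp only [mem_range, mem_Icc]
  omega

theorem eq_zero_of_forall_sum_mul_choose_succ_eq_zero (m : ℕ) {e : ℕ → R}
    (he : ∀ n, ∑ i ∈ range (m + 1), e i * ((n + 1).choose i : R) = 0) : ∀ k ≤ m, e k = 0 := by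
  induction m generalizing e with
  | zero =>
    intro k hk
    simpa [Nat.le_zero.1 hk] using he 0
  | succ m ih =>
    have hdiff : ∀ n, ∑ i ∈ range (m + 1), e (i + 1) * ((n + 1).choose i : R) = 0 := fun n => by
      calc ∑ i ∈ range (m + 1), e (i + 1) * ((n + 1).choose i : R)
          = ∑ i ∈ range (m + 2), e i * ((n + 2).choose i - (n + 1).choose i : R) := by
            rw [sum_range_succ' _ (m + 1)]
            simp [Nat.choose_succ_succ' (n + 1)]
        _ = 0 := by simp only [mul_sub, sum_sub_distrib, he]; exact sub_self 0
    have htail : ∀ k, 1 ≤ k → k ≤ m + 1 → e k = 0 := fun k hk1 hk2 => by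
      obtain ⟨j, rfl⟩ := Nat.exists_eq_add_of_le' hk1
      exact ih hdiff j (by omega)
    intro k hk
    rcases Nat.eq_zero_or_pos k with rfl | hk0
    · have h1 := he 0
      rwa [sum_eq_single_of_mem 0 (by simp) fun i hi hi0 => by
          rw [htail i (Nat.pos_of_ne_zero hi0) (Nat.lt_succ_iff.1 (mem_range.1 hi)), zero_mul],
        Nat.choose_zero_right, Nat.cast_one, mul_one] at h1
    · exact htail k hk0 hk

end BinomialBasis

theorem finite_seqs (ℓ n : ℕ) : (Seqs ℓ n).Finite := by
  refine (Set.finite_range fun (g : Fin (ℓ + 1) → Fin (n + 1)) (i : ℕ) =>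
    if h : i < ℓ + 1 then (g ⟨i, h⟩ : ℕ) else 0).subset ?_
  rintro v ⟨hin, hout⟩
  have hle : ∀ i, v i < n + 1 := fun i => by
    by_cases hi : i ∈ Icc 1 ℓ
    · exact Nat.lt_succ_of_le (mem_Icc.1 (hin i hi)).2
    · simp [hout i hi]
  refine ⟨fun i => ⟨v i, hle i⟩, funext fun i => ?_⟩
  dsimp only
  split_ifs with h
  · rfl
  · exact (hout i (by simp only [mem_Icc]; omega)).symm

theorem des_comp_of_strictMonoOn {f : ℕ → ℕ} {U : Set ℕ} (hf : StrictMonoOn f U) {v : ℕ → ℕ}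
    (hv : ∀ j, v j ∈ U) (ℓ : ℕ) : Des ℓ (f ∘ v) = Des ℓ v := by
  ext i
  simp only [Des, Set.mem_ofPred_eq, Function.comp, hf.lt_iff_lt (hv _) (hv _)]

theorem StrictMonoOn.strictMonoOn_invFunOn {α β : Type*} [LinearOrder α] [LinearOrder β]
    [Nonempty α] {f : α → β} {s : Set α} (hf : StrictMonoOn f s) :
    StrictMonoOn (Function.invFunOn f s) (f '' s) := by
  rintro _ ⟨x, hx, rfl⟩ _ ⟨y, hy, rfl⟩ hxy
  rw [hf.injOn.leftInvOn_invFunOn hx, hf.injOn.leftInvOn_invFunOn hy]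
  exact (hf.lt_iff_lt hx hy).1 hxy

def fiberSet (ℓ : ℕ) (J S : Set ℕ) : Set (ℕ → ℕ) :=
  {v | Set.MapsTo v (Set.Icc 1 ℓ) (insert 1 S) ∧ S ⊆ v '' Set.Icc 1 ℓ ∧
    (∀ j ∉ Set.Icc 1 ℓ, v j = 0) ∧ Des ℓ v = J ∧ v ℓ ≠ 1}

section Fibers

variable {ℓ : ℕ} {J S : Set ℕ} {v : ℕ → ℕ}

theorem apply_mem_of_mem_fiberSet (hv : v ∈ fiberSet ℓ J S) (j : ℕ) :
    v j ∈ insert 0 (insert 1 S) := by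
  by_cases hj : j ∈ Set.Icc 1 ℓ
  · exact Or.inr (hv.1 hj)
  · exact Or.inl (hv.2.2.1 j hj)

theorem comp_mem_fiberSet {f : ℕ → ℕ} (hf : StrictMonoOn f (insert 0 (insert 1 S)))
    (h0 : f 0 = 0) (h1 : f 1 = 1) (hv : v ∈ fiberSet ℓ J S) : f ∘ v ∈ fiberSet ℓ J (f '' S) := by
  have hU := apply_mem_of_mem_fiberSet hv
  obtain ⟨hmaps, hcover, hout, hdes, hlast⟩ := hv
  refine ⟨?_, ?_, fun j hj => by simp [hout j hj, h0], ?_, fun h => hlast ?_⟩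
  · have hins : f '' insert 1 S = insert 1 (f '' S) := by rw [Set.image_insert_eq, h1]
    exact hins ▸ (Set.mapsTo_image f _).comp hmaps
  · rw [Set.image_comp]
    exact Set.image_mono hcover
  · rw [des_comp_of_strictMonoOn hf hU, hdes]
  · exact hf.injOn (hU ℓ) (by simp) (h.trans h1.symm)

theorem ncard_fiberSet_image {f : ℕ → ℕ} (hf : StrictMonoOn f (insert 0 (insert 1 S)))
    (h0 : f 0 = 0) (h1 : f 1 = 1) : (fiberSet ℓ J S).ncard = (fiberSet ℓ J (f '' S)).ncard := by
  set U : Set ℕ := insert 0 (insert 1 S)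
  set g := Function.invFunOn f U
  have hfU : f '' U = insert 0 (insert 1 (f '' S)) := by simp only [U, Set.image_insert_eq, h0, h1]
  have hinv : Set.InvOn g f U (f '' U) := hf.injOn.bijOn_image.invOn_invFunOn
  have hg : StrictMonoOn g (insert 0 (insert 1 (f '' S))) := hfU ▸ hf.strictMonoOn_invFunOn
  have hg0 : g 0 = 0 := by simpa [h0] using hinv.1 (show (0 : ℕ) ∈ U by simp [U])
  have hg1 : g 1 = 1 := by simpa [h1] using hinv.1 (show (1 : ℕ) ∈ U by simp [U])
  have hgS : g '' (f '' S) = S := hinv.1.image_image' fun x hx => by simp [U, hx]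
  refine (Set.InvOn.bijOn (f := (f ∘ ·)) (f' := (g ∘ ·)) ⟨fun v hv => ?_, fun w hw => ?_⟩
    (fun v hv => comp_mem_fiberSet hf h0 h1 hv) (fun w hw => ?_)).ncard_eq
  · exact funext fun j => hinv.1 (apply_mem_of_mem_fiberSet hv j)
  · exact funext fun j => hinv.2 (hfU ▸ apply_mem_of_mem_fiberSet hw j)
  · simpa [hgS] using comp_mem_fiberSet hg hg0 hg1 hw

end Fibers

section Rank

def rankIn (T : Finset ℕ) (x : ℕ) : ℕ := #{t ∈ T | t ≤ x}

theorem rankIn_lt_rankIn {T : Finset ℕ} {x y : ℕ} (hy : y ∈ T) (hxy : x < y) :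
    rankIn T x < rankIn T y := by
  refine card_lt_card ((ssubset_iff_of_subset fun t ht => ?_).2 ⟨y, ?_, ?_⟩)
  · simp only [mem_filter] at ht ⊢
    exact ⟨ht.1, ht.2.trans hxy.le⟩
  · simp [hy]
  · simp [hxy]

theorem rankIn_zero {T : Finset ℕ} (hT : 0 ∉ T) : rankIn T 0 = 0 :=
  card_eq_zero.2 (filter_eq_empty_iff.2 fun _ ht ht0 => hT (Nat.le_zero.1 ht0 ▸ ht))

theorem strictMonoOn_rankIn (T : Finset ℕ) : StrictMonoOn (rankIn T) (insert 0 ↑T) :=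
  fun _ _ _ hy hxy => rankIn_lt_rankIn (hy.resolve_left ((Nat.zero_le _).trans_lt hxy).ne') hxy

variable {S : Finset ℕ}

theorem rankIn_insert_one_one (hS : ∀ s ∈ S, 2 ≤ s) : rankIn (insert 1 S) 1 = 1 := by
  refine card_eq_one.2 ⟨1, eq_singleton_iff_unique_mem.2 ⟨by simp, fun t ht => ?_⟩⟩
  obtain ⟨ht, ht1⟩ := mem_filter.1 ht
  rcases mem_insert.1 ht with rfl | ht
  · rfl
  · have := hS t ht; omega

theorem image_rankIn_insert_one (hS : ∀ s ∈ S, 2 ≤ s) :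
    rankIn (insert 1 S) '' S = Set.Icc 2 (#S + 1) := by
  have hinj : Set.InjOn (rankIn (insert 1 S)) S :=
    (strictMonoOn_rankIn _).injOn.mono fun s hs => by simp [hs]
  rw [← coe_image, ← coe_Icc]
  refine congrArg _ (eq_of_subset_of_card_le (fun r hr => ?_) ?_)
  · obtain ⟨s, hs, rfl⟩ := mem_image.1 hr
    have hlt := rankIn_lt_rankIn (T := insert 1 S) (x := 1) (mem_insert_of_mem hs) (hS s hs)
    have hle : rankIn (insert 1 S) s ≤ #S + 1 := (card_filter_le _ _).trans (card_insert_le _ _)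
    rw [rankIn_insert_one_one hS] at hlt
    exact mem_Icc.2 ⟨hlt, hle⟩
  · rw [card_image_of_injOn hinj, Nat.card_Icc]
    omega

end Rank

theorem ncard_fiberSet_eq_ncard_fiberSet_Icc {ℓ : ℕ} {J : Set ℕ} {S : Finset ℕ}
    (hS : ∀ s ∈ S, 2 ≤ s) :
    (fiberSet ℓ J S).ncard = (fiberSet ℓ J (Set.Icc 2 (#S + 1))).ncard := by
  rw [← image_rankIn_insert_one hS]
  have h0 : 0 ∉ insert 1 S := fun h => by
    rcases mem_insert.1 h with h | h
    · omega
    · have := hS 0 h; omega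
  refine ncard_fiberSet_image ?_ (rankIn_zero h0) (rankIn_insert_one_one hS)
  simpa using strictMonoOn_rankIn (insert 1 S)

theorem mem_fiberSet_iff_of_subset {ℓ n : ℕ} {J : Set ℕ} {S : Finset ℕ} (hS : S ⊆ Icc 2 (n + 1))
    {v : ℕ → ℕ} : v ∈ fiberSet ℓ J S ↔
      v ∈ Seqs ℓ (n + 1) ∧ (Des ℓ v = J ∧ v ℓ ≠ 1) ∧ ((Icc 1 ℓ).image v).erase 1 = S := by
  constructor
  · rintro ⟨hmaps, hcover, hout, hdes, hlast⟩
    refine ⟨⟨fun j hj => ?_, fun j hj => hout j (by simpa using hj)⟩, ⟨hdes, hlast⟩, ?_⟩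
    · rcases hmaps (by simpa using hj) with h | h
      · simp [h]
      · have := mem_Icc.1 (hS h)
        exact mem_Icc.2 ⟨by omega, this.2⟩
    · ext x
      simp only [mem_erase, mem_image]
      constructor
      · rintro ⟨hx1, j, hj, rfl⟩
        exact (hmaps (by simpa using hj)).resolve_left hx1
      · intro hx
        obtain ⟨j, hj, hjx⟩ := hcover hx
        exact ⟨by have := mem_Icc.1 (hS hx); omega, j, by simpa using hj, hjx⟩
  · rintro ⟨⟨-, hout⟩, ⟨hdes, hlast⟩, hvals⟩
    refine ⟨fun j hj => ?_, fun x hx => ?_, fun j hj => hout j (by simpa using hj), hdes, hlast⟩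
    · by_cases h : v j = 1
      · exact Or.inl h
      · right
        rw [mem_coe, ← hvals]
        exact mem_erase.2 ⟨h, mem_image_of_mem v (by simpa using hj)⟩
    · rw [mem_coe, ← hvals] at hx
      obtain ⟨j, hj, rfl⟩ := mem_image.1 (mem_erase.1 hx).2
      exact ⟨j, by simpa using hj, rfl⟩

theorem bcoef_eq_ncard_fiberSet (I : Finset ℕ) (i : ℕ) :
    bcoef I i = (fiberSet (I.sup id) ↑(I.erase (I.sup id)) (Set.Icc 2 (i + 1))).ncard := by
  have hins : insert 1 (Set.Icc 2 (i + 1)) = Set.Icc 1 (i + 1) := by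
    ext x
    simp only [Set.mem_insert_iff, Set.mem_Icc]
    omega
  rw [bcoef]
  congr 1
  ext v
  simp only [fiberSet, Seqs, hins, Set.MapsTo, Set.subset_def, Set.mem_image, Set.mem_Icc, mem_Icc,
    Set.mem_ofPred_eq]
  tauto

theorem bcoef_eq_zero_of_lt {I : Finset ℕ} {i : ℕ} (h : I.sup id < i) : bcoef I i = 0 := by
  have hempty : fiberSet (I.sup id) ↑(I.erase (I.sup id)) (Set.Icc 2 (i + 1)) = ∅ :=
    Set.eq_empty_of_forall_notMem fun v hv => by
      have hcard := (Set.ncard_le_ncard hv.2.1 ((Set.finite_Icc _ _).image v)).trans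
        (Set.ncard_image_le (Set.finite_Icc _ _))
      simp only [Set.ncard_Icc_nat] at hcard
      omega
  rw [bcoef_eq_ncard_fiberSet, hempty, Set.ncard_empty]

theorem ncount_succ_eq_sum_powerset (I : Finset ℕ) (m : ℕ) :
    Ncount I (m + 1) = ∑ S ∈ (Icc 2 (m + 1)).powerset,
      (fiberSet (I.sup id) ↑(I.erase (I.sup id)) S).ncard := by
  classical
  have hfin : {v ∈ Seqs (I.sup id) (m + 1) |
      Des (I.sup id) v = ↑(I.erase (I.sup id)) ∧ v (I.sup id) ≠ 1}.Finite :=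
    (finite_seqs _ _).subset fun v hv => hv.1
  rw [Ncount, ← hfin.coe_toFinset, Set.ncard_coe_finset,
    card_eq_sum_card_fiberwise (f := fun v => ((Icc 1 (I.sup id)).image v).erase 1)
      (t := (Icc 2 (m + 1)).powerset) fun v hv => ?_]
  · refine sum_congr rfl fun S hS => ?_
    rw [← Set.ncard_coe_finset]
    congr 1
    ext v
    rw [mem_fiberSet_iff_of_subset (mem_powerset.1 hS)]
    simp only [coe_filter, Set.Finite.mem_toFinset, Set.mem_ofPred_eq]
    tauto
  · rw [mem_coe, mem_powerset]
    intro x hx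
    obtain ⟨hx1, hx⟩ := mem_erase.1 hx
    obtain ⟨j, hj, rfl⟩ := mem_image.1 hx
    have := mem_Icc.1 ((hfin.mem_toFinset.1 (mem_coe.1 hv)).1.1 j hj)
    exact mem_Icc.2 ⟨by omega, this.2⟩

theorem ncount_succ_eq_sum_choose_mul_bcoef (I : Finset ℕ) (m : ℕ) :
    Ncount I (m + 1) = ∑ i ∈ range (I.sup id + 1), m.choose i * bcoef I i := by
  rw [ncount_succ_eq_sum_powerset, sum_congr rfl fun S hS => ncard_fiberSet_eq_ncard_fiberSet_Icc
    fun s hs => (mem_Icc.1 (mem_powerset.1 hS hs)).1]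
  simp_rw [← bcoef_eq_ncard_fiberSet]
  have hcard : #(Icc 2 (m + 1)) = m := by simp
  rw [sum_powerset_apply_card, hcard]
  simp only [smul_eq_mul]
  rcases le_total m (I.sup id) with h | h
  · exact sum_subset (range_subset_range.2 (by omega)) fun i _ hi => by
      rw [Nat.choose_eq_zero_of_lt (by simpa using hi), zero_mul]
  · exact (sum_subset (range_subset_range.2 (by omega)) fun i _ hi => by
      rw [bcoef_eq_zero_of_lt (by simpa using hi), mul_zero]).symm

theorem stmt_14_general (I : Finset ℕ)
    (c : ℕ → ℚ)
    (hc : ∀ n : ℕ, 1 ≤ n →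
      (Ncount I n : ℚ) = ∑ i ∈ Finset.range (I.sup id + 1), c i * (n.choose i : ℚ)) :
    ∀ k ≤ I.sup id,
      c k = ((∑ i ∈ Finset.Icc k (I.sup id), (-1 : ℤ) ^ (i - k) * (bcoef I i : ℤ)) : ℚ) := by
  intro k hk
  have hN : ∀ m, (Ncount I (m + 1) : ℚ) = ∑ j ∈ range (I.sup id + 1),
      (∑ i ∈ Icc j (I.sup id), (-1) ^ (i - j) * (bcoef I i : ℚ)) * ((m + 1).choose j : ℚ) :=
    fun m => by
      rw [← sum_mul_choose_eq_sum_mul_choose_succ, ncount_succ_eq_sum_choose_mul_bcoef]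
      push_cast
      exact sum_congr rfl fun i _ => mul_comm _ _
  have hck := eq_zero_of_forall_sum_mul_choose_succ_eq_zero (I.sup id)
    (e := fun j => c j - ∑ i ∈ Icc j (I.sup id), (-1) ^ (i - j) * (bcoef I i : ℚ))
    (fun n => by simp only [sub_mul, sum_sub_distrib, ← hc (n + 1) n.succ_pos, hN, sub_self]) k hk
  push_cast
  exact sub_eq_zero.1 hck

/-- if `c_0,…,c_{α_t}` are the coefficients of `N(I,n)` in the basis
`(C(n,i))_i`, then `c_k = Σ_{i=k}^{α_t} (-1)^{i-k} b_i(I)` for `0 ≤ k ≤ α_t`;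
in particular each `c_k` is an integer. -/
theorem stmt_14 (I : Finset ℕ) (hI : I.Nonempty) (hIpos : ∀ x ∈ I, 1 ≤ x)
    (c : ℕ → ℚ)
    (hc : ∀ n : ℕ, 1 ≤ n →
      (Ncount I n : ℚ) = ∑ i ∈ Finset.range (I.sup id + 1), c i * (n.choose i : ℚ)) :
    ∀ k ≤ I.sup id,
      c k = ((∑ i ∈ Finset.Icc k (I.sup id), (-1 : ℤ) ^ (i - k) * (bcoef I i : ℤ)) : ℚ) :=
  stmt_14_general I c hc
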